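/- arXiv:1904.04512 — 4 statements merged into one kernel-verified Lean document; each statement's English description precedes it below -/
import Mathlib

section
/- Fix α₂ ∈ (0, 2π). Then Σ_{m=(m₁,m₂)∈ℤ²} (2πm₁) / ((2πm₁)² + (α₂ + 2πm₂)²)² = 0 and Σ_{m=(m₁,m₂)∈ℤ²} (π + 2πm₁) / ((π + 2πm₁)² + (α₂ + 2πm₂)²)² = 0; that is, the sum S₁(α₁, α₂) vanishes at α₁ = 0 and at α₁ = π. -/
open Real

lemma tsum_eq_zero_of_odd_equiv {β : Type*} (f : β → ℝ) (e : β ≃ β)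
    (h : ∀ b, f (e b) = -f b) : (∑' b, f b) = 0 := by
  have h1 : (∑' b, f (e b)) = ∑' b, f b := e.tsum_eq f
  have h2 : (∑' b, f (e b)) = ∑' b, -f b := by simp only [h]
  rw [h2, tsum_neg] at h1
  linarith

/-- Fix `α₂ ∈ (0, 2π)`. Then
`Σ_{m∈ℤ²} (2πm₁) / ((2πm₁)² + (α₂ + 2πm₂)²)² = 0` and
`Σ_{m∈ℤ²} (π + 2πm₁) / ((π + 2πm₁)² + (α₂ + 2πm₂)²)² = 0`;
that is, the sum `S₁(α₁, α₂)` vanishes at `α₁ = 0` and at `α₁ = π`. -/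
theorem green_grad_vanishes_at_zero_and_pi (α₂ : ℝ) (hα₂ : α₂ ∈ Set.Ioo 0 (2 * π)) :
    (∑' m : ℤ × ℤ,
      (2 * π * (m.1 : ℝ)) /
        ((2 * π * (m.1 : ℝ)) ^ 2 + (α₂ + 2 * π * (m.2 : ℝ)) ^ 2) ^ 2) = 0 ∧
    (∑' m : ℤ × ℤ,
      (π + 2 * π * (m.1 : ℝ)) /
        ((π + 2 * π * (m.1 : ℝ)) ^ 2 + (α₂ + 2 * π * (m.2 : ℝ)) ^ 2) ^ 2) = 0 := by
  constructor
  · refine tsum_eq_zero_of_odd_equiv _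
      ⟨fun m => (-m.1, m.2), fun m => (-m.1, m.2), fun m => by simp, fun m => by simp⟩ ?_
    intro m
    simp only [Equiv.coe_fn_mk, Int.cast_neg]
    rw [← neg_div]
    congr 1
    · ring
    · ring
  · refine tsum_eq_zero_of_odd_equiv _
      ⟨fun m => (-1 - m.1, m.2), fun m => (-1 - m.1, m.2), fun m => by simp, fun m => by simp⟩ ?_
    intro m
    simp only [Equiv.coe_fn_mk, Int.cast_sub, Int.cast_neg, Int.cast_one]
    rw [← neg_div]
    congr 1
    · ring
    · ring
end

section
/- Let M > 0 and let y : [0, 2π] → ℝ be continuous with 0 < y(t) ≤ M for all t, y(π) = M, and suppose there exist C > 0 and δ₀ > 0 such that y(t) ≥ M − C(t − π)² whenever |t − π| ≤ δ₀. Let a > 0 and b ∈ ℝ satisfy aM + b < 0. Then there exists a unique ω̂ ∈ (√M, ∞) such that 1 + (a ω̂² + b) · (1/2π) ∫₀^{2π} y(t)/(ω̂² − y(t)) dt = 0. Moreover, the function ω ↦ a ω² + b + 2π / ∫₀^{2π} y(t)/(ω² − y(t)) dt is strictly increasing on (√M, ∞), so this root is simple. -/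
open Real MeasureTheory

/-!
For `s > M` let `J s = ∫₀^{2π} y t / (s - y t)`. It is positive, continuous and decreasing on
`(M, ∞)`, and it blows up as `s ↓ M`: at `s = M + Cρ²` the quadratic bound gives
`s - y t ≤ 2Cρ²` on the window `|t - π| ≤ ρ`, so `J s ≥ M / (2Cρ)`. Hence
`G s = a s + b + 2π / J s` is continuous and strictly increasing, tends to `aM + b < 0` as `s ↓ M`
and to `∞` as `s → ∞`, and so vanishes exactly once. Multiplying the defect equation by
`2π / J(ω²)` turns it into `G(ω²) = 0`.
-/

open Set Filter Topology

noncomputable def bandIntegral (y : ℝ → ℝ) (l u s : ℝ) : ℝ :=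
  ∫ t in l..u, y t / (s - y t)

section bandIntegral

variable {y : ℝ → ℝ} {l u M s : ℝ}

theorem continuousOn_div_sub (hy : ContinuousOn y (Icc l u)) (hle : ∀ t ∈ Icc l u, y t ≤ M)
    (hs : M < s) : ContinuousOn (fun t => y t / (s - y t)) (Icc l u) :=
  hy.div (continuousOn_const.sub hy) fun t ht => by linarith [hle t ht]

theorem bandIntegral_pos (hlu : l < u) (hy : ContinuousOn y (Icc l u))
    (hpos : ∀ t ∈ Icc l u, 0 < y t) (hle : ∀ t ∈ Icc l u, y t ≤ M) (hs : M < s) :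
    0 < bandIntegral y l u s :=
  intervalIntegral.intervalIntegral_pos_of_pos_on
    ((continuousOn_div_sub hy hle hs).intervalIntegrable_of_Icc hlu.le)
    (fun t ht => div_pos (hpos t (Ioo_subset_Icc_self ht))
      (by linarith [hle t (Ioo_subset_Icc_self ht)])) hlu

theorem bandIntegral_antitoneOn (hlu : l ≤ u) (hy : ContinuousOn y (Icc l u))
    (hnonneg : ∀ t ∈ Icc l u, 0 ≤ y t) (hle : ∀ t ∈ Icc l u, y t ≤ M) :
    AntitoneOn (bandIntegral y l u) (Ioi M) := fun s hs s' hs' hss' =>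
  intervalIntegral.integral_mono_on hlu
    ((continuousOn_div_sub hy hle hs').intervalIntegrable_of_Icc hlu)
    ((continuousOn_div_sub hy hle hs).intervalIntegrable_of_Icc hlu)
    fun t ht => div_le_div_of_nonneg_left (hnonneg t ht) (by linarith [hle t ht, mem_Ioi.1 hs])
      (by linarith)

theorem bandIntegral_continuousOn (hlu : l ≤ u) (hy : ContinuousOn y (Icc l u))
    (hle : ∀ t ∈ Icc l u, y t ≤ M) : ContinuousOn (bandIntegral y l u) (Ioi M) := by
  intro s₀ hs₀
  obtain ⟨r, hMr, hrs₀⟩ := exists_between (mem_Ioi.1 hs₀)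
  have hIoc : uIoc l u ⊆ Icc l u := by rw [uIoc_of_le hlu]; exact Ioc_subset_Icc_self
  refine (intervalIntegral.continuousAt_of_dominated_interval
    (bound := fun t => |y t| / (r - M)) ?_ ?_ ?_ ?_).continuousWithinAt
  · filter_upwards [Ioi_mem_nhds hrs₀] with s hs
    exact ((continuousOn_div_sub hy hle (hMr.trans hs)).mono hIoc).aestronglyMeasurable
      measurableSet_uIoc
  · filter_upwards [Ioi_mem_nhds hrs₀] with s hs
    refine ae_of_all _ fun t ht => ?_
    have hyt := hle t (hIoc ht)
    rw [norm_div, norm_eq_abs, norm_eq_abs,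
      abs_of_pos (a := s - y t) (by linarith [mem_Ioi.1 hs])]
    exact div_le_div_of_nonneg_left (abs_nonneg _) (by linarith) (by linarith [mem_Ioi.1 hs])
  · exact (hy.abs.div_const _).intervalIntegrable_of_Icc hlu
  · refine ae_of_all _ fun t ht => ?_
    exact continuousAt_const.div (continuousAt_id.sub continuousAt_const)
      (by linarith [hle t (hIoc ht), mem_Ioi.1 hs₀])

theorem le_bandIntegral_of_quadratic (hy : ContinuousOn y (Icc l u))
    (hnonneg : ∀ t ∈ Icc l u, 0 ≤ y t) (hle : ∀ t ∈ Icc l u, y t ≤ M) {C ρ t₀ : ℝ}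
    (hC : 0 < C) (hρ : 0 < ρ) (hl : l ≤ t₀ - ρ) (hu : t₀ + ρ ≤ u) (hρM : C * ρ ^ 2 ≤ M / 2)
    (hquad : ∀ t ∈ Icc (t₀ - ρ) (t₀ + ρ), M - C * (t - t₀) ^ 2 ≤ y t) :
    M / (2 * C * ρ) ≤ bandIntegral y l u (M + C * ρ ^ 2) := by
  have hsub : Icc (t₀ - ρ) (t₀ + ρ) ⊆ Icc l u := Icc_subset_Icc hl hu
  have hs : M < M + C * ρ ^ 2 := lt_add_of_pos_right M (by positivity)
  have hint : IntervalIntegrable (fun t => y t / (M + C * ρ ^ 2 - y t)) volume l u :=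
    (continuousOn_div_sub hy hle hs).intervalIntegrable_of_Icc (hl.trans (by linarith))
  have hpoint : ∀ t ∈ Icc (t₀ - ρ) (t₀ + ρ),
      M / 2 / (2 * C * ρ ^ 2) ≤ y t / (M + C * ρ ^ 2 - y t) := by
    intro t ht
    have hsq : (t - t₀) ^ 2 ≤ ρ ^ 2 := sq_le_sq' (by linarith [ht.1]) (by linarith [ht.2])
    have hyt := hquad t ht
    have hCsq := mul_le_mul_of_nonneg_left hsq hC.le
    exact div_le_div₀ (by linarith) (by linarith) (by linarith [hle t (hsub ht)]) (by linarith)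
  calc M / (2 * C * ρ)
      = ((t₀ + ρ) - (t₀ - ρ)) * (M / 2 / (2 * C * ρ ^ 2)) := by field_simp; ring
    _ = ∫ _ in (t₀ - ρ)..(t₀ + ρ), M / 2 / (2 * C * ρ ^ 2) := by
      rw [intervalIntegral.integral_const, smul_eq_mul]
    _ ≤ ∫ t in (t₀ - ρ)..(t₀ + ρ), y t / (M + C * ρ ^ 2 - y t) :=
      intervalIntegral.integral_mono_on (by linarith) intervalIntegrable_const
        (hint.mono_set (by rwa [uIcc_of_le (by linarith), uIcc_of_le (by linarith)])) hpoint
    _ ≤ bandIntegral y l u (M + C * ρ ^ 2) := by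
      refine intervalIntegral.integral_mono_interval hl (by linarith) hu ?_ hint
      refine (ae_restrict_iff' measurableSet_Ioc).2 (ae_of_all _ fun t ht => ?_)
      exact div_nonneg (hnonneg t (Ioc_subset_Icc_self ht))
        (by linarith [hle t (Ioc_subset_Icc_self ht)])

theorem tendsto_bandIntegral_nhdsGT (hM : 0 < M) (hy : ContinuousOn y (Icc l u))
    (hnonneg : ∀ t ∈ Icc l u, 0 ≤ y t) (hle : ∀ t ∈ Icc l u, y t ≤ M) {C δ₀ t₀ : ℝ}
    (hC : 0 < C) (hδ₀ : 0 < δ₀) (ht₀ : t₀ ∈ Ioo l u)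
    (hquad : ∀ t ∈ Icc l u, |t - t₀| ≤ δ₀ → M - C * (t - t₀) ^ 2 ≤ y t) :
    Tendsto (bandIntegral y l u) (𝓝[>] M) atTop := by
  refine tendsto_atTop.2 fun B => ?_
  have hsmall : ∀ {d : ℝ}, 0 < d → ∀ᶠ ρ in 𝓝[>] (0 : ℝ), ρ ≤ d := fun hd =>
    nhdsWithin_le_nhds (eventually_le_nhds hd)
  have hB : ∀ᶠ ρ in 𝓝[>] (0 : ℝ), B ≤ M / (2 * C) * ρ⁻¹ :=
    (tendsto_inv_nhdsGT_zero.const_mul_atTop (by positivity)).eventually_ge_atTop B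
  have hρM : ∀ᶠ ρ in 𝓝[>] (0 : ℝ), C * ρ ^ 2 ≤ M / 2 :=
    nhdsWithin_le_nhds <| ((continuous_const.mul (continuous_pow 2)).tendsto' 0 0 (by simp))
      |>.eventually (eventually_le_nhds (half_pos hM))
  obtain ⟨ρ, hρ, hBρ, hρδ, hρl, hρu, hρM⟩ : ∃ ρ, 0 < ρ ∧ B ≤ M / (2 * C) * ρ⁻¹ ∧ ρ ≤ δ₀ ∧
      ρ ≤ t₀ - l ∧ ρ ≤ u - t₀ ∧ C * ρ ^ 2 ≤ M / 2 := by
    refine Eventually.exists (f := 𝓝[>] (0 : ℝ)) ?_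
    filter_upwards [self_mem_nhdsWithin, hB, hsmall hδ₀, hsmall (sub_pos.2 ht₀.1),
      hsmall (sub_pos.2 ht₀.2), hρM] with ρ h₀ h₁ h₂ h₃ h₄ h₅ using ⟨h₀, h₁, h₂, h₃, h₄, h₅⟩
  filter_upwards [Ioc_mem_nhdsGT (lt_add_of_pos_right M (by positivity : 0 < C * ρ ^ 2))]
    with s hs
  calc B ≤ M / (2 * C) * ρ⁻¹ := hBρ
    _ = M / (2 * C * ρ) := by field_simp
    _ ≤ bandIntegral y l u (M + C * ρ ^ 2) :=
      le_bandIntegral_of_quadratic hy hnonneg hle hC hρ (by linarith) (by linarith) hρM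
        fun t ht => hquad t (Icc_subset_Icc (by linarith) (by linarith) ht)
          (abs_le.2 ⟨by linarith [ht.1], by linarith [ht.2]⟩)
    _ ≤ bandIntegral y l u s :=
      bandIntegral_antitoneOn (ht₀.1.trans ht₀.2).le hy hnonneg hle hs.1
        (mem_Ioi.2 (hs.1.trans_le hs.2)) hs.2

end bandIntegral

section dispersion

variable {J : ℝ → ℝ} {S : Set ℝ} {M a b c : ℝ}

theorem strictMonoOn_add_div_of_antitoneOn (ha : 0 < a) (hc : 0 ≤ c) (hJ : AntitoneOn J S)
    (hJpos : ∀ s ∈ S, 0 < J s) : StrictMonoOn (fun s => a * s + b + c / J s) S :=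
  fun s hs s' hs' hss' => by
    have := div_le_div_of_nonneg_left hc (hJpos s' hs') (hJ hs hs' hss'.le)
    have := mul_lt_mul_of_pos_left hss' ha
    dsimp only
    linarith

theorem exists_add_div_eq_zero (ha : 0 < a) (hc : 0 ≤ c) (hab : a * M + b < 0)
    (hJ : ContinuousOn J (Ioi M)) (hJpos : ∀ s ∈ Ioi M, 0 < J s)
    (hJlim : Tendsto J (𝓝[>] M) atTop) : ∃ s ∈ Ioi M, a * s + b + c / J s = 0 := by
  have hcont : ContinuousOn (fun s => a * s + b + c / J s) (Ioi M) :=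
    ((continuousOn_const.mul continuousOn_id).add continuousOn_const).add
      (continuousOn_const.div hJ fun s hs => (hJpos s hs).ne')
  have hlim_edge : Tendsto (fun s => a * s + b + c / J s) (𝓝[>] M) (𝓝 (a * M + b)) := by
    simpa using (((continuous_const.mul continuous_id).add continuous_const).tendsto M
      |>.mono_left nhdsWithin_le_nhds).add (hJlim.const_div_atTop c)
  have hlim_top : Tendsto (fun s => a * s + b + c / J s) atTop atTop := by
    refine tendsto_atTop_mono' _ ?_
      ((tendsto_id.const_mul_atTop ha).atTop_add (tendsto_const_nhds (x := b)))
    filter_upwards [eventually_gt_atTop M] with s hs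
    exact le_add_of_nonneg_right (div_nonneg hc (hJpos s hs).le)
  exact isPreconnected_Ioi.intermediate_value_Ioi (l₁ := 𝓝[>] M) inf_le_right
    (le_principal_iff.2 (Ioi_mem_atTop M)) hcont hlim_edge hlim_top hab

end dispersion

theorem one_add_mul_one_div_mul_eq_zero_iff {K : Type*} [Field K] {k c x : K} (hc : c ≠ 0)
    (hx : x ≠ 0) : 1 + k * (1 / c * x) = 0 ↔ k + c / x = 0 := by
  rw [show 1 + k * (1 / c * x) = x / c * (k + c / x) by field_simp; ring, mul_eq_zero,
    or_iff_right (div_ne_zero hx hc)]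

theorem defect_frequency_exists_unique_general (M : ℝ) (hM : 0 < M) (y : ℝ → ℝ)
    (hy_cont : ContinuousOn y (Set.Icc 0 (2 * π)))
    (hy_pos : ∀ t ∈ Set.Icc 0 (2 * π), 0 < y t)
    (hy_le : ∀ t ∈ Set.Icc 0 (2 * π), y t ≤ M)
    (C δ₀ : ℝ) (hC : 0 < C) (hδ₀ : 0 < δ₀)
    (hy_quad : ∀ t ∈ Set.Icc 0 (2 * π), |t - π| ≤ δ₀ → M - C * (t - π) ^ 2 ≤ y t)
    (a b : ℝ) (ha : 0 < a) (hab : a * M + b < 0) :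
    (∃! ωhat : ℝ, ωhat ∈ Set.Ioi (Real.sqrt M) ∧
      1 + (a * ωhat ^ 2 + b) *
        ((1 / (2 * π)) * ∫ t in (0:ℝ)..(2 * π), y t / (ωhat ^ 2 - y t)) = 0) ∧
    StrictMonoOn
      (fun ω => a * ω ^ 2 + b + 2 * π / ∫ t in (0:ℝ)..(2 * π), y t / (ω ^ 2 - y t))
      (Set.Ioi (Real.sqrt M)) := by
  set J := bandIntegral y 0 (2 * π)
  have hy_nonneg : ∀ t ∈ Icc 0 (2 * π), 0 ≤ y t := fun t ht => (hy_pos t ht).le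
  have hJ_pos : ∀ s ∈ Ioi M, 0 < J s := fun s hs =>
    bandIntegral_pos two_pi_pos hy_cont hy_pos hy_le hs
  have hsq : MapsTo (· ^ 2) (Ioi √M) (Ioi M) := fun ω hω => lt_sq_of_sqrt_lt hω
  have hF_mono : StrictMonoOn (fun ω => a * ω ^ 2 + b + 2 * π / J (ω ^ 2)) (Ioi √M) :=
    (strictMonoOn_add_div_of_antitoneOn ha two_pi_pos.le
      (bandIntegral_antitoneOn two_pi_pos.le hy_cont hy_nonneg hy_le) hJ_pos).comp
      ((pow_left_strictMonoOn₀ two_ne_zero).mono fun ω hω => (sqrt_nonneg M).trans hω.le) hsq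
  refine ⟨?_, hF_mono⟩
  suffices ∃! ω, ω ∈ Ioi √M ∧ a * ω ^ 2 + b + 2 * π / J (ω ^ 2) = 0 from
    (existsUnique_congr fun ω => and_congr_right fun hω =>
      one_add_mul_one_div_mul_eq_zero_iff two_pi_pos.ne' (hJ_pos _ (hsq hω)).ne').2 this
  obtain ⟨s, hs, hGs⟩ := exists_add_div_eq_zero ha two_pi_pos.le hab
    (bandIntegral_continuousOn two_pi_pos.le hy_cont hy_le) hJ_pos
    (tendsto_bandIntegral_nhdsGT hM hy_cont hy_nonneg hy_le hC hδ₀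
      ⟨pi_pos, by linarith [pi_pos]⟩ hy_quad)
  have hroot : a * √s ^ 2 + b + 2 * π / J (√s ^ 2) = 0 := by
    rwa [sq_sqrt (hM.le.trans hs.le)]
  exact ⟨√s, ⟨sqrt_lt_sqrt hM.le hs, hroot⟩, fun ω hω =>
    hF_mono.injOn hω.1 (sqrt_lt_sqrt hM.le hs) (hω.2.trans hroot.symm)⟩

/-- Analytic core of Theorem 3.1: with `M > 0`, `y` continuous, `0 < y ≤ M`,
`y(π) = M` with nondegenerate quadratic behaviour at `π`, and `a > 0`, `b ∈ ℝ`
with `aM + b < 0`, there exists a unique `ωhat ∈ (√M, ∞)` such that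
`1 + (a ωhat² + b) · (1/2π) ∫₀^{2π} y(t)/(ωhat² − y(t)) dt = 0`. Moreover
`ω ↦ a ω² + b + 2π / ∫₀^{2π} y(t)/(ω² − y(t)) dt` is strictly increasing
on `(√M, ∞)`. -/
theorem defect_frequency_exists_unique (M : ℝ) (hM : 0 < M) (y : ℝ → ℝ)
    (hy_cont : ContinuousOn y (Set.Icc 0 (2 * π)))
    (hy_pos : ∀ t ∈ Set.Icc 0 (2 * π), 0 < y t)
    (hy_le : ∀ t ∈ Set.Icc 0 (2 * π), y t ≤ M)
    (hy_max : y π = M)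
    (C δ₀ : ℝ) (hC : 0 < C) (hδ₀ : 0 < δ₀)
    (hy_quad : ∀ t ∈ Set.Icc 0 (2 * π), |t - π| ≤ δ₀ → M - C * (t - π) ^ 2 ≤ y t)
    (a b : ℝ) (ha : 0 < a) (hab : a * M + b < 0) :
    (∃! ωhat : ℝ, ωhat ∈ Set.Ioi (Real.sqrt M) ∧
      1 + (a * ωhat ^ 2 + b) *
        ((1 / (2 * π)) * ∫ t in (0:ℝ)..(2 * π), y t / (ωhat ^ 2 - y t)) = 0) ∧
    StrictMonoOn
      (fun ω => a * ω ^ 2 + b + 2 * π / ∫ t in (0:ℝ)..(2 * π), y t / (ω ^ 2 - y t))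
      (Set.Ioi (Real.sqrt M)) :=
  defect_frequency_exists_unique_general M hM y hy_cont hy_pos hy_le C δ₀ hC hδ₀ hy_quad a b ha hab
end

section
/- Let U ⊆ ℝ be open, s₀ ∈ U, a > 0, b ∈ ℝ. Let y : U × [0, 2π] → ℝ be continuous with continuous partial derivative ∂y/∂s, and let x : U → ℝ be differentiable with x(s₀) > 0. Assume that for all s ∈ U and t ∈ [0, 2π]: 0 < y(s, t) < x(s) and a·y(s, t) + b > 0; that the identity (a x(s) + b) ∫₀^{2π} y(s, t)/(x(s) − y(s, t)) dt = 1 holds for all s ∈ U; and that ∂y/∂s(s₀, t) > 0 for every t ∈ [0, 2π]. Then x'(s₀) ≠ 0. -/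
/-!
Suppose `x'(s₀) = 0` and freeze the band value at `ξ = x(s₀)`:
`K(s) = ∫ y(s,t) / (ξ - y(s,t)) dt`. Differentiating under the integral sign,
`K'(s₀) = ∫ ξ ∂ₛy(s₀,t) / (ξ - y(s₀,t))² dt > 0`. On the other hand the defect equation says
`∫ y(s,t) / (x(s) - y(s,t)) dt = (a x(s) + b)⁻¹`, which has derivative `0` at `s₀`, and `K(s)`
differs from it by `O(|x(s) - x(s₀)|) = o(|s - s₀|)`, because `ξ ↦ ∫ y / (ξ - y)` is Lipschitz
while the denominators stay uniformly away from `0`. Hence `K'(s₀) = 0`, a contradiction.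
-/

open Real MeasureTheory Set Filter Topology

section CompactTube

variable {X Y : Type*} [TopologicalSpace X] [LocallyCompactSpace X] [TopologicalSpace Y]
  {U : Set X} {S : Set Y} {x₀ : X}

theorem exists_eventually_norm_le_of_continuousOn_prod {E : Type*} [SeminormedAddCommGroup E]
    {f : X → Y → E} (hU : U ∈ 𝓝 x₀) (hS : IsCompact S)
    (hf : ContinuousOn (fun p : X × Y => f p.1 p.2) (U ×ˢ S)) :
    ∃ C, ∀ᶠ x in 𝓝 x₀, ∀ y ∈ S, ‖f x y‖ ≤ C := by
  obtain ⟨K, hK, hKU, hKc⟩ := local_compact_nhds hU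
  obtain ⟨C, hC⟩ := (hKc.prod hS).exists_bound_of_continuousOn (hf.mono (prod_mono hKU le_rfl))
  exact ⟨C, mem_of_superset hK fun x hx y hy => hC (x, y) ⟨hx, hy⟩⟩

theorem exists_pos_eventually_le_of_continuousOn_prod {f : X → Y → ℝ} (hU : U ∈ 𝓝 x₀)
    (hS : IsCompact S) (hf : ContinuousOn (fun p : X × Y => f p.1 p.2) (U ×ˢ S))
    (hpos : ∀ x ∈ U, ∀ y ∈ S, 0 < f x y) :
    ∃ m > 0, ∀ᶠ x in 𝓝 x₀, ∀ y ∈ S, m ≤ f x y := by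
  obtain ⟨K, hK, hKU, hKc⟩ := local_compact_nhds hU
  obtain ⟨m, hm, hmf⟩ := (hKc.prod hS).exists_forall_le' (hf.mono (prod_mono hKU le_rfl))
    fun p hp => hpos p.1 (hKU hp.1) p.2 hp.2
  exact ⟨m, hm, mem_of_superset hK fun x hx y hy => hmf (x, y) ⟨hx, hy⟩⟩

theorem exists_pos_eventually_le_sub_of_continuousOn_prod {f : X → ℝ} {g : X → Y → ℝ}
    (hU : U ∈ 𝓝 x₀) (hS : IsCompact S) (hf : ContinuousOn f U)
    (hg : ContinuousOn (fun p : X × Y => g p.1 p.2) (U ×ˢ S))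
    (hfg : ∀ x ∈ U, ∀ y ∈ S, g x y < f x) :
    ∃ m > 0, ∀ᶠ x in 𝓝 x₀, ∀ y ∈ S, m ≤ f x - g x y ∧ m ≤ f x₀ - g x y := by
  obtain ⟨m, hm, hgap⟩ :=
    exists_pos_eventually_le_of_continuousOn_prod (f := fun x y => f x - g x y) hU hS
      ((hf.comp continuous_fst.continuousOn fun p hp => hp.1).sub hg)
      fun x hx y hy => sub_pos.2 (hfg x hx y hy)
  have hclose : ∀ᶠ x in 𝓝 x₀, dist (f x) (f x₀) < m / 2 :=
    Metric.tendsto_nhds.1 (hf.continuousAt hU) (m / 2) (half_pos hm)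
  refine ⟨m / 2, half_pos hm, ?_⟩
  filter_upwards [hgap, hclose] with x hx hx' y hy
  have hfx := (abs_lt.1 (Real.dist_eq _ _ ▸ hx')).2
  constructor <;> linarith [hx y hy]

end CompactTube

theorem hasDerivAt_zero_of_isBigO_sub {𝕜 F : Type*} [NontriviallyNormedField 𝕜]
    [NormedAddCommGroup F] [NormedSpace 𝕜 F] {f g : 𝕜 → F} {x : 𝕜}
    (hf : HasDerivAt f 0 x) (hg : g =O[𝓝 x] fun s => f s - f x) : HasDerivAt g 0 x := by
  have hgx : g x = 0 := hg.eq_zero_imp.self_of_nhds (sub_self _)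
  rw [hasDerivAt_iff_isLittleO] at hf ⊢
  simpa [hgx] using hg.trans_isLittleO (by simpa using hf)

theorem hasDerivAt_intervalIntegral_of_continuousOn {E : Type*} [NormedAddCommGroup E]
    [NormedSpace ℝ E] {F F' : ℝ → ℝ → E} {a b s₀ C : ℝ} (hab : a ≤ b)
    (hF : ∀ᶠ s in 𝓝 s₀, ContinuousOn (F s) (Icc a b))
    (hF' : ContinuousOn (F' s₀) (Icc a b))
    (hderiv : ∀ᶠ s in 𝓝 s₀, ∀ t ∈ Icc a b, HasDerivAt (F · t) (F' s t) s)
    (hbound : ∀ᶠ s in 𝓝 s₀, ∀ t ∈ Icc a b, ‖F' s t‖ ≤ C) :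
    HasDerivAt (fun s => ∫ t in a..b, F s t) (∫ t in a..b, F' s₀ t) s₀ := by
  have hIoc : uIoc a b ⊆ Icc a b := uIoc_of_le hab ▸ Ioc_subset_Icc_self
  refine (intervalIntegral.hasDerivAt_integral_of_dominated_loc_of_deriv_le (hderiv.and hbound)
    ?_ (hF.self_of_nhds.intervalIntegrable_of_Icc hab) ?_ ?_ (intervalIntegrable_const (c := C))
    ?_).2
  · filter_upwards [hF] with s hs
    exact (hs.mono hIoc).aestronglyMeasurable measurableSet_uIoc
  · exact (hF'.mono hIoc).aestronglyMeasurable measurableSet_uIoc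
  · exact .of_forall fun t ht s hs => hs.2 t (hIoc ht)
  · exact .of_forall fun t ht s hs => hs.1 t (hIoc ht)

theorem hasDerivAt_div_sub {f : ℝ → ℝ} {f' ξ s : ℝ} (hf : HasDerivAt f f' s) (hs : ξ - f s ≠ 0) :
    HasDerivAt (fun s => f s / (ξ - f s)) (ξ * f' / (ξ - f s) ^ 2) s := by
  refine (hf.div ((hasDerivAt_const s ξ).sub hf) hs).congr_deriv ?_
  simp only [Pi.sub_apply]
  ring

theorem hasDerivAt_integral_div_sub {y dy : ℝ → ℝ → ℝ} {a b ξ s₀ m D : ℝ} (hab : a ≤ b)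
    (hm : 0 < m) (hy : ∀ᶠ s in 𝓝 s₀, ContinuousOn (y s) (Icc a b))
    (hdy₀ : ContinuousOn (dy s₀) (Icc a b))
    (hderiv : ∀ᶠ s in 𝓝 s₀, ∀ t ∈ Icc a b, HasDerivAt (y · t) (dy s t) s)
    (hgap : ∀ᶠ s in 𝓝 s₀, ∀ t ∈ Icc a b, m ≤ ξ - y s t)
    (hD : ∀ᶠ s in 𝓝 s₀, ∀ t ∈ Icc a b, |dy s t| ≤ D) :
    HasDerivAt (fun s => ∫ t in a..b, y s t / (ξ - y s t))
      (∫ t in a..b, ξ * dy s₀ t / (ξ - y s₀ t) ^ 2) s₀ := by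
  have hne : ∀ᶠ s in 𝓝 s₀, ∀ t ∈ Icc a b, ξ - y s t ≠ 0 := by
    filter_upwards [hgap] with s hs t ht
    exact (hm.trans_le (hs t ht)).ne'
  refine hasDerivAt_intervalIntegral_of_continuousOn (F := fun s t => y s t / (ξ - y s t))
    (F' := fun s t => ξ * dy s t / (ξ - y s t) ^ 2) (C := |ξ| * D / m ^ 2) hab ?_ ?_ ?_ ?_
  · filter_upwards [hy, hne] with s hys hs
    exact hys.div (continuousOn_const.sub hys) hs
  · have hy₀ := hy.self_of_nhds
    exact (continuousOn_const.mul hdy₀).div ((continuousOn_const.sub hy₀).pow 2)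
      fun t ht => pow_ne_zero 2 (hne.self_of_nhds t ht)
  · filter_upwards [hderiv, hne] with s hs hs' t ht
    exact hasDerivAt_div_sub (hs t ht) (hs' t ht)
  · filter_upwards [hgap, hD] with s hs hs' t ht
    have hm2 : m ^ 2 ≤ (ξ - y s t) ^ 2 := pow_le_pow_left₀ hm.le (hs t ht) 2
    rw [Real.norm_eq_abs, abs_div, abs_mul, abs_of_nonneg (sq_nonneg (ξ - y s t))]
    have hD0 : 0 ≤ D := (abs_nonneg _).trans (hs' t ht)
    exact div_le_div₀ (by positivity) (mul_le_mul_of_nonneg_left (hs' t ht) (abs_nonneg ξ))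
      (by positivity) hm2

theorem abs_integral_div_sub_sub_le {g : ℝ → ℝ} {a b ξ η m Y : ℝ} (hab : a ≤ b) (hm : 0 < m)
    (hg : ContinuousOn g (Icc a b)) (hξ : ∀ t ∈ Icc a b, m ≤ ξ - g t)
    (hη : ∀ t ∈ Icc a b, m ≤ η - g t) (hY : ∀ t ∈ Icc a b, |g t| ≤ Y) :
    |(∫ t in a..b, g t / (ξ - g t)) - ∫ t in a..b, g t / (η - g t)|
      ≤ Y / m ^ 2 * |ξ - η| * (b - a) := by
  have hint : ∀ ζ, (∀ t ∈ Icc a b, m ≤ ζ - g t) →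
      IntervalIntegrable (fun t => g t / (ζ - g t)) volume a b := fun ζ hζ =>
    ContinuousOn.intervalIntegrable_of_Icc hab
      (hg.div (continuousOn_const.sub hg) fun t ht => (hm.trans_le (hζ t ht)).ne')
  rw [← intervalIntegral.integral_sub (hint ξ hξ) (hint η hη),
    ← abs_of_nonneg (sub_nonneg.2 hab)]
  refine intervalIntegral.norm_integral_le_of_norm_le_const (E := ℝ) fun t ht => ?_
  have ht : t ∈ Icc a b := Ioc_subset_Icc_self (uIoc_of_le hab ▸ ht)
  have hξt := hξ t ht
  have hηt := hη t ht
  have hgt := hY t ht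
  have hsplit : g t / (ξ - g t) - g t / (η - g t) = g t * (η - ξ) / ((ξ - g t) * (η - g t)) := by
    field_simp [(hm.trans_le hξt).ne', (hm.trans_le hηt).ne']
    ring
  rw [Real.norm_eq_abs, hsplit, abs_div, abs_mul, abs_sub_comm η,
    abs_of_pos (mul_pos (hm.trans_le hξt) (hm.trans_le hηt))]
  have hY0 : 0 ≤ Y := (abs_nonneg _).trans hgt
  rw [div_mul_eq_mul_div]
  exact div_le_div₀ (by positivity) (mul_le_mul_of_nonneg_right hgt (abs_nonneg _))
    (by positivity) (sq m ▸ mul_le_mul hξt hηt hm.le (hm.le.trans hξt))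

theorem integral_mul_div_sub_sq_pos {g g' : ℝ → ℝ} {a b ξ : ℝ} (hab : a < b) (hξ : 0 < ξ)
    (hg : ContinuousOn g (Icc a b)) (hg' : ContinuousOn g' (Icc a b))
    (hgξ : ∀ t ∈ Icc a b, g t < ξ) (hg'_pos : ∀ t ∈ Icc a b, 0 < g' t) :
    0 < ∫ t in a..b, ξ * g' t / (ξ - g t) ^ 2 := by
  have hgap : ∀ t ∈ Icc a b, 0 < ξ - g t := fun t ht => sub_pos.2 (hgξ t ht)
  have hpos : ∀ t ∈ Icc a b, 0 < ξ * g' t / (ξ - g t) ^ 2 := fun t ht =>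
    div_pos (mul_pos hξ (hg'_pos t ht)) (pow_pos (hgap t ht) 2)
  have ha : a ∈ Icc a b := left_mem_Icc.2 hab.le
  exact intervalIntegral.integral_pos hab
    ((continuousOn_const.mul hg').div ((continuousOn_const.sub hg).pow 2)
      fun t ht => pow_ne_zero 2 (hgap t ht).ne')
    (fun t ht => (hpos t (Ioc_subset_Icc_self ht)).le) ⟨a, ha, hpos a ha⟩

theorem defect_band_not_flat_general (U : Set ℝ) (hU : IsOpen U) (s₀ : ℝ) (hs₀ : s₀ ∈ U)
    (a b : ℝ)
    (y dy : ℝ → ℝ → ℝ) (x : ℝ → ℝ)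
    (hy_cont : ContinuousOn (fun p : ℝ × ℝ => y p.1 p.2) (U ×ˢ Set.Icc 0 (2 * π)))
    (hdy : ∀ s ∈ U, ∀ t ∈ Set.Icc 0 (2 * π),
      HasDerivAt (fun s' => y s' t) (dy s t) s)
    (hdy_cont : ContinuousOn (fun p : ℝ × ℝ => dy p.1 p.2) (U ×ˢ Set.Icc 0 (2 * π)))
    (hx_diff : ∀ s ∈ U, DifferentiableAt ℝ x s)
    (h_bounds : ∀ s ∈ U, ∀ t ∈ Set.Icc 0 (2 * π), 0 < y s t ∧ y s t < x s)
    (h_eq : ∀ s ∈ U,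
      (a * x s + b) * ∫ t in (0:ℝ)..(2 * π), y s t / (x s - y s t) = 1)
    (h_dy_pos : ∀ t ∈ Set.Icc 0 (2 * π), 0 < dy s₀ t) :
    deriv x s₀ ≠ 0 := by
  intro hflat
  have hx_deriv : HasDerivAt x 0 s₀ := hflat ▸ (hx_diff s₀ hs₀).hasDerivAt
  have hUs₀ : U ∈ 𝓝 s₀ := hU.mem_nhds hs₀
  have h0I : (0:ℝ) ∈ Icc 0 (2 * π) := left_mem_Icc.2 two_pi_pos.le
  obtain ⟨Y, hY⟩ := exists_eventually_norm_le_of_continuousOn_prod hUs₀ isCompact_Icc hy_cont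
  obtain ⟨D, hD⟩ := exists_eventually_norm_le_of_continuousOn_prod hUs₀ isCompact_Icc hdy_cont
  obtain ⟨m, hm, hgap⟩ := exists_pos_eventually_le_sub_of_continuousOn_prod hUs₀ isCompact_Icc
    (fun s hs => (hx_diff s hs).continuousAt.continuousWithinAt) hy_cont
    fun s hs t ht => (h_bounds s hs t ht).2
  have hK := hasDerivAt_integral_div_sub two_pi_pos.le hm
    (eventually_of_mem hUs₀ fun s hs => hy_cont.uncurry_left s hs)
    (hdy_cont.uncurry_left s₀ hs₀)
    (eventually_of_mem hUs₀ hdy) (hgap.mono fun s hs t ht => (hs t ht).2) hD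
  have hK_pos := integral_mul_div_sub_sq_pos two_pi_pos
    ((h_bounds s₀ hs₀ 0 h0I).1.trans (h_bounds s₀ hs₀ 0 h0I).2) (hy_cont.uncurry_left s₀ hs₀)
    (hdy_cont.uncurry_left s₀ hs₀) (fun t ht => (h_bounds s₀ hs₀ t ht).2) h_dy_pos
  have hG : HasDerivAt (fun s => (a * x s + b)⁻¹) 0 s₀ := by
    refine (((hx_deriv.const_mul a).add_const b).inv ?_).congr_deriv (by simp)
    exact left_ne_zero_of_mul_eq_one (h_eq s₀ hs₀)
  have hdiff : HasDerivAt (fun s => (∫ t in (0:ℝ)..(2 * π), y s t / (x s₀ - y s t))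
      - (a * x s + b)⁻¹) 0 s₀ := by
    refine hasDerivAt_zero_of_isBigO_sub hx_deriv (.of_bound (Y / m ^ 2 * (2 * π)) ?_)
    filter_upwards [hUs₀, hY, hgap] with s hs hYs hgs
    rw [← eq_inv_of_mul_eq_one_right (h_eq s hs), Real.norm_eq_abs, Real.norm_eq_abs,
      abs_sub_comm (x s)]
    simpa [mul_right_comm] using abs_integral_div_sub_sub_le two_pi_pos.le hm
      (hy_cont.uncurry_left s hs) (fun t ht => (hgs t ht).2) (fun t ht => (hgs t ht).1) hYs
  exact hK_pos.ne' (by simpa using (hK.sub hG).unique hdiff)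

/-- Abstract content of Proposition 4.3: let `U ⊆ ℝ` be open, `s₀ ∈ U`, `a > 0`,
`b ∈ ℝ`. Let `y : U × [0, 2π] → ℝ` be continuous with continuous partial
derivative `∂y/∂s`, and let `x : U → ℝ` be differentiable with `x(s₀) > 0`.
Assume that for all `s ∈ U`, `t ∈ [0, 2π]`: `0 < y(s,t) < x(s)` and
`a·y(s,t) + b > 0`; that `(a x(s) + b) ∫₀^{2π} y(s,t)/(x(s) − y(s,t)) dt = 1`
for all `s ∈ U`; and that `∂y/∂s(s₀, t) > 0` for all `t`. Then `x'(s₀) ≠ 0`. -/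
theorem defect_band_not_flat (U : Set ℝ) (hU : IsOpen U) (s₀ : ℝ) (hs₀ : s₀ ∈ U)
    (a b : ℝ) (ha : 0 < a)
    (y dy : ℝ → ℝ → ℝ) (x : ℝ → ℝ)
    (hy_cont : ContinuousOn (fun p : ℝ × ℝ => y p.1 p.2) (U ×ˢ Set.Icc 0 (2 * π)))
    (hdy : ∀ s ∈ U, ∀ t ∈ Set.Icc 0 (2 * π),
      HasDerivAt (fun s' => y s' t) (dy s t) s)
    (hdy_cont : ContinuousOn (fun p : ℝ × ℝ => dy p.1 p.2) (U ×ˢ Set.Icc 0 (2 * π)))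
    (hx_diff : ∀ s ∈ U, DifferentiableAt ℝ x s)
    (hx_pos : 0 < x s₀)
    (h_bounds : ∀ s ∈ U, ∀ t ∈ Set.Icc 0 (2 * π), 0 < y s t ∧ y s t < x s)
    (h_ab : ∀ s ∈ U, ∀ t ∈ Set.Icc 0 (2 * π), 0 < a * y s t + b)
    (h_eq : ∀ s ∈ U,
      (a * x s + b) * ∫ t in (0:ℝ)..(2 * π), y s t / (x s - y s t) = 1)
    (h_dy_pos : ∀ t ∈ Set.Icc 0 (2 * π), 0 < dy s₀ t) :
    deriv x s₀ ≠ 0 :=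
  defect_band_not_flat_general U hU s₀ hs₀ a b y dy x hy_cont hdy hdy_cont hx_diff h_bounds h_eq
    h_dy_pos
end

section
/- For all real u > 0 and c > 0, | ∫₀^{2π} 1/(u + (c/2)(t − π)²) dt − π·√(2/(u c)) | ≤ 4/(π c). In particular, (1/2π)∫₀^{2π} 1/(u + (c/2)(t − π)²) dt = 1/√(2 u c) + O(1) uniformly as u → 0⁺. -/
open Real MeasureTheory

/-! Substituting `s = √(k/u) (t - m)` turns `1 / (u + k (t - m)²)` into a multiple of the
derivative of `arctan`, so the integral over `[m - L, m + L]` is `2 arctan (√(k/u) L) / √(uk)`.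
Since `arctan x + arctan x⁻¹ = π / 2`, it falls short of the whole-line value `π / √(uk)` by
`2 arctan (√(k/u) L)⁻¹ / √(uk)`, and `arctan y ≤ y` bounds this by `2 / (kL)`, uniformly
in `u`. -/

theorem Real.arctan_le_self {x : ℝ} (hx : 0 ≤ x) : arctan x ≤ x := by
  simpa only [tan_arctan] using le_tan (arctan_nonneg.2 hx) (arctan_lt_pi_div_two x)

theorem Real.pi_div_two_sub_arctan_mem_Icc {x : ℝ} (hx : 0 < x) :
    π / 2 - arctan x ∈ Set.Icc 0 x⁻¹ := by
  rw [← arctan_inv_of_pos hx]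
  have hx' : 0 ≤ x⁻¹ := inv_nonneg.2 hx.le
  exact ⟨arctan_nonneg.2 hx', arctan_le_self hx'⟩

theorem Real.sqrt_mul_eq_mul_sqrt_div {u : ℝ} (hu : 0 ≤ u) (k : ℝ) :
    √(u * k) = u * √(k / u) := by
  rcases hu.eq_or_lt with rfl | hu
  · simp
  rw [show u * k = u ^ 2 * (k / u) by field_simp, sqrt_mul (sq_nonneg u), sqrt_sq hu.le]

theorem integral_one_div_add_mul_sq {u k : ℝ} (hu : 0 < u) (hk : 0 < k) (m a b : ℝ) :
    ∫ t in a..b, 1 / (u + k * (t - m) ^ 2) =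
      (arctan (√(k / u) * (b - m)) - arctan (√(k / u) * (a - m))) / √(u * k) := by
  set s := √(k / u) with hs_def
  have hs : 0 < s := sqrt_pos.2 (div_pos hk hu)
  have hintegrand (t : ℝ) :
      1 / (u + k * (t - m) ^ 2) = u⁻¹ * (1 / (1 + (s * t - s * m) ^ 2)) := by
    rw [← mul_sub, mul_pow, sq_sqrt (div_pos hk hu).le]
    field_simp
  simp_rw [hintegrand]
  rw [intervalIntegral.integral_const_mul,
    intervalIntegral.integral_comp_mul_sub (fun x => 1 / (1 + x ^ 2)) hs.ne',
    integral_one_div_one_add_sq, smul_eq_mul, sqrt_mul_eq_mul_sqrt_div hu.le, ← hs_def,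
    mul_sub, mul_sub]
  field_simp

theorem abs_integral_one_div_add_mul_sq_sub_le {u k L : ℝ} (hu : 0 < u) (hk : 0 < k)
    (hL : 0 < L) (m : ℝ) :
    |(∫ t in (m - L)..(m + L), 1 / (u + k * (t - m) ^ 2)) - π / √(u * k)| ≤ 2 / (k * L) := by
  set s := √(k / u)
  have hs : 0 < s := sqrt_pos.2 (div_pos hk hu)
  have hr : √(u * k) = u * s := sqrt_mul_eq_mul_sqrt_div hu.le k
  have hsL : 0 < s * L := mul_pos hs hL
  obtain ⟨hlo, hhi⟩ := pi_div_two_sub_arctan_mem_Icc hsL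
  have hdiff : (∫ t in (m - L)..(m + L), 1 / (u + k * (t - m) ^ 2)) - π / √(u * k) =
      -(2 / (u * s) * (π / 2 - arctan (s * L))) := by
    rw [integral_one_div_add_mul_sq hu hk, hr, add_sub_cancel_left, sub_sub_cancel_left,
      mul_neg, arctan_neg]
    ring
  rw [hdiff, abs_neg, abs_of_nonneg (by positivity)]
  calc 2 / (u * s) * (π / 2 - arctan (s * L)) ≤ 2 / (u * s) * (s * L)⁻¹ := by gcongr
    _ = 2 / (u * s ^ 2 * L) := by field_simp
    _ = 2 / (k * L) := by rw [sq_sqrt (div_pos hk hu).le]; field_simp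

/-- For all real `u > 0` and `c > 0`,
`|∫₀^{2π} 1/(u + (c/2)(t − π)²) dt − π·√(2/(uc))| ≤ 4/(πc)`. In particular,
`(1/2π)∫₀^{2π} 1/(u + (c/2)(t − π)²) dt = 1/√(2uc) + O(1)` uniformly as `u → 0⁺`. -/
theorem singular_part_estimate (u c : ℝ) (hu : 0 < u) (hc : 0 < c) :
    |(∫ t in (0:ℝ)..(2 * π), 1 / (u + (c / 2) * (t - π) ^ 2)) -
        π * Real.sqrt (2 / (u * c))| ≤ 4 / (π * c) ∧
    |(1 / (2 * π)) * (∫ t in (0:ℝ)..(2 * π), 1 / (u + (c / 2) * (t - π) ^ 2)) -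
        1 / Real.sqrt (2 * u * c)| ≤ 2 / (π ^ 2 * c) := by
  set I := ∫ t in (0:ℝ)..(2 * π), 1 / (u + (c / 2) * (t - π) ^ 2)
  set r := √(u * (c / 2))
  have hr : 0 < r := sqrt_pos.2 (by positivity)
  have hI : |I - π / r| ≤ 4 / (π * c) := by
    have h := abs_integral_one_div_add_mul_sq_sub_le hu (half_pos hc) pi_pos π
    rwa [sub_self, ← two_mul, show 2 / (c / 2 * π) = 4 / (π * c) by field_simp; ring] at h
  have hr_inv : √(2 / (u * c)) = r⁻¹ := by
    rw [← sqrt_inv]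
    congr 1
    field_simp
  have hr_two : √(2 * u * c) = 2 * r := by
    rw [show 2 * u * c = 2 ^ 2 * (u * (c / 2)) by ring, sqrt_mul (by norm_num),
      sqrt_sq zero_le_two]
  refine ⟨by rwa [hr_inv, ← div_eq_mul_inv], ?_⟩
  rw [hr_two, show 1 / (2 * π) * I - 1 / (2 * r) = (I - π / r) / (2 * π) by field_simp,
    abs_div, abs_of_pos two_pi_pos, div_le_iff₀ two_pi_pos]
  calc |I - π / r| ≤ 4 / (π * c) := hI
    _ = 2 / (π ^ 2 * c) * (2 * π) := by field_simp; ring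
end
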